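/- There exists a constant C > 0 such that for every n ∈ ℤ and every y ∈ [2^{n-1}, 2^{n+2}], the one-dimensional Dirichlet heat kernel T_t(x,y) = H_t(x-y) - H_t(x+y) satisfies ∫_0^∞ ∫_{4^n}^∞ |∂_x T_t(x,y)| t^{-1/2} dt dx ≤ C. -/

import Mathlib

open Real Set MeasureTheory

noncomputable def H (t u : ℝ) : ℝ := (4 * π * t) ^ (-(1:ℝ)/2) * Real.exp (-u^2 / (4*t))

noncomputable def Tdir (t x y : ℝ) : ℝ := H t (x - y) - H t (x + y)

/-! `∂ₓ Tₜ(x, y) = (4πt)^(-1/2) (φₜ(x + y) - φₜ(x - y)) / (2t)` with `φₜ(u) = u e^(-u²/4t)` (`gaussFlux`), and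
`|φₜ'(u)| ≤ 8 e^(-u²/8t)`. By the mean value theorem the integrand `|∂ₓ Tₜ| t^(-1/2)` is at most
`8y/t²`, and at most `8y e^(-x²/32t)/t²` once `x ≥ 2y`, since then `|u| ≥ x/2` on `[x - y, x + y]`.
Integrating in `t > 4ⁿ` gives `8y/4ⁿ` for every `x` and `256y/x²` for `x ≥ 2y`; splitting the
`x`-integral at `8·2ⁿ ≥ 2y` bounds the double integral by `96 y/2ⁿ ≤ 384`. -/

open Filter Topology

noncomputable def gaussFlux (t u : ℝ) : ℝ := u * exp (-u ^ 2 / (4 * t))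

lemma hasDerivAt_H (t u : ℝ) :
    HasDerivAt (H t) (-((4 * π * t) ^ (-(1:ℝ)/2) / (2 * t)) * gaussFlux t u) u := by
  have h : HasDerivAt (fun u : ℝ => -u ^ 2 / (4 * t)) (-(2 * u) / (4 * t)) u := by
    simpa using (hasDerivAt_pow 2 u).neg.div_const (4 * t)
  refine (h.exp.const_mul ((4 * π * t) ^ (-(1:ℝ)/2))).congr_deriv ?_
  rw [gaussFlux]
  field_simp
  ring

lemma hasDerivAt_Tdir (t x y : ℝ) :
    HasDerivAt (fun x' => Tdir t x' y)
      ((4 * π * t) ^ (-(1:ℝ)/2) / (2 * t) * (gaussFlux t (x + y) - gaussFlux t (x - y))) x := by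
  have hm := (hasDerivAt_H t (x - y)).comp x ((hasDerivAt_id x).sub_const y)
  have hp := (hasDerivAt_H t (x + y)).comp x ((hasDerivAt_id x).add_const y)
  refine (hm.sub hp).congr_deriv ?_
  simp only [mul_one]
  ring

lemma hasDerivAt_gaussFlux {t : ℝ} (ht : t ≠ 0) (u : ℝ) :
    HasDerivAt (gaussFlux t) (exp (-u ^ 2 / (4 * t)) * (1 - u ^ 2 / (2 * t))) u := by
  have h : HasDerivAt (fun u : ℝ => -u ^ 2 / (4 * t)) (-(2 * u) / (4 * t)) u := by
    simpa using (hasDerivAt_pow 2 u).neg.div_const (4 * t)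
  refine ((hasDerivAt_id u).mul h.exp).congr_deriv ?_
  simp only [id]
  field_simp
  ring

lemma abs_exp_neg_mul_one_sub_two_mul_le {s : ℝ} (hs : 0 ≤ s) :
    |exp (-s) * (1 - 2 * s)| ≤ 8 * exp (-(s / 2)) := by
  have hsplit : exp (-s) = exp (-(s / 2)) * exp (-(s / 2)) := by rw [← exp_add]; ring_nf
  have hlin : 1 + 2 * s ≤ 8 * exp (s / 2) := by nlinarith [add_one_le_exp (s / 2)]
  have hcancel : exp (-(s / 2)) * exp (s / 2) = 1 := by rw [← exp_add]; simp
  calc |exp (-s) * (1 - 2 * s)| ≤ exp (-s) * (1 + 2 * s) := by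
        rw [abs_mul, abs_of_pos (exp_pos _)]
        gcongr
        exact abs_le.2 ⟨by linarith, by linarith⟩
    _ ≤ exp (-s) * (8 * exp (s / 2)) := by gcongr
    _ = 8 * exp (-(s / 2)) := by rw [hsplit]; linear_combination 8 * exp (-(s / 2)) * hcancel

lemma abs_deriv_gaussFlux_le {t : ℝ} (ht : 0 < t) (u : ℝ) :
    |exp (-u ^ 2 / (4 * t)) * (1 - u ^ 2 / (2 * t))| ≤ 8 * exp (-u ^ 2 / (8 * t)) := by
  have h := abs_exp_neg_mul_one_sub_two_mul_le (by positivity : 0 ≤ u ^ 2 / (4 * t))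
  convert h using 3 <;> field_simp <;> ring

lemma abs_gaussFlux_sub_le {t a b C : ℝ} (ht : 0 < t) (hab : a ≤ b)
    (hC : ∀ u ∈ Icc a b, 8 * exp (-u ^ 2 / (8 * t)) ≤ C) :
    |gaussFlux t b - gaussFlux t a| ≤ C * (b - a) := by
  have h := (convex_Icc a b).norm_image_sub_le_of_norm_hasDerivWithin_le
    (fun u _ => (hasDerivAt_gaussFlux ht.ne' u).hasDerivWithinAt)
    (fun u hu => (abs_deriv_gaussFlux_le ht u).trans (hC u hu))
    (left_mem_Icc.2 hab) (right_mem_Icc.2 hab)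
  rwa [Real.norm_eq_abs, Real.norm_eq_abs, abs_of_nonneg (sub_nonneg.2 hab)] at h

lemma abs_deriv_Tdir_mul_rpow_le {t : ℝ} (ht : 0 < t) (x y : ℝ) :
    |deriv (fun x' => Tdir t x' y) x| * t ^ (-(1:ℝ)/2)
      ≤ |gaussFlux t (x + y) - gaussFlux t (x - y)| / (2 * t ^ 2) := by
  have hsplit : (4 * π * t) ^ (-(1:ℝ)/2) * t ^ (-(1:ℝ)/2) = (4 * π) ^ (-(1:ℝ)/2) * t⁻¹ := by
    rw [mul_rpow (by positivity) ht.le, mul_assoc, ← rpow_add ht]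
    norm_num [rpow_neg_one]
  have hπ : (4 * π) ^ (-(1:ℝ)/2) ≤ 1 :=
    rpow_le_one_of_one_le_of_nonpos (by nlinarith [pi_gt_three]) (by norm_num)
  rw [(hasDerivAt_Tdir t x y).deriv, abs_mul, abs_of_nonneg (by positivity)]
  calc (4 * π * t) ^ (-(1:ℝ)/2) / (2 * t) * |gaussFlux t (x + y) - gaussFlux t (x - y)|
        * t ^ (-(1:ℝ)/2)
      = (4 * π * t) ^ (-(1:ℝ)/2) * t ^ (-(1:ℝ)/2)
          * (|gaussFlux t (x + y) - gaussFlux t (x - y)| / (2 * t)) := by ring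
    _ = (4 * π) ^ (-(1:ℝ)/2) * (|gaussFlux t (x + y) - gaussFlux t (x - y)| / (2 * t ^ 2)) := by
        rw [hsplit]; field_simp
    _ ≤ |gaussFlux t (x + y) - gaussFlux t (x - y)| / (2 * t ^ 2) :=
        mul_le_of_le_one_left (by positivity) hπ

lemma abs_deriv_Tdir_mul_rpow_le_of_le {t x y C : ℝ} (ht : 0 < t) (hy : 0 ≤ y)
    (hC : ∀ u ∈ Icc (x - y) (x + y), 8 * exp (-u ^ 2 / (8 * t)) ≤ C) :
    |deriv (fun x' => Tdir t x' y) x| * t ^ (-(1:ℝ)/2) ≤ C * y / t ^ 2 := by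
  have h := abs_gaussFlux_sub_le ht (by linarith) hC
  calc |deriv (fun x' => Tdir t x' y) x| * t ^ (-(1:ℝ)/2)
      ≤ |gaussFlux t (x + y) - gaussFlux t (x - y)| / (2 * t ^ 2) :=
        abs_deriv_Tdir_mul_rpow_le ht x y
    _ ≤ C * (x + y - (x - y)) / (2 * t ^ 2) := by gcongr
    _ = C * y / t ^ 2 := by field_simp; ring

lemma integrableOn_Ioi_inv_sq {c : ℝ} (hc : 0 < c) :
    IntegrableOn (fun x : ℝ => (x ^ 2)⁻¹) (Ioi c) := by
  refine (integrableOn_Ioi_rpow_of_lt (by norm_num : (-2:ℝ) < -1) hc).congr_fun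
    (fun x hx => ?_) measurableSet_Ioi
  dsimp only
  rw [rpow_neg (hc.trans hx).le, rpow_two]

lemma integral_Ioi_inv_sq {c : ℝ} (hc : 0 < c) : ∫ x in Ioi c, (x ^ 2)⁻¹ = c⁻¹ := by
  rw [← setIntegral_congr_fun measurableSet_Ioi (f := fun x : ℝ => x ^ (-2:ℝ))
    (fun x hx => by dsimp only; rw [rpow_neg (hc.trans hx).le, rpow_two]),
    integral_Ioi_rpow_of_lt (by norm_num) hc]
  norm_num [rpow_neg_one]

lemma hasDerivAt_exp_neg_div_div {a t : ℝ} (ha : a ≠ 0) (ht : t ≠ 0) :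
    HasDerivAt (fun s => exp (-a / s) / a) (exp (-a / t) / t ^ 2) t := by
  have h : HasDerivAt (fun s => -a / s) (a / t ^ 2) t := by
    simpa [div_eq_mul_inv] using (hasDerivAt_inv ht).const_mul (-a)
  refine (h.exp.div_const a).congr_deriv ?_
  field_simp

lemma tendsto_exp_neg_div_atTop (a : ℝ) : Tendsto (fun s => exp (-a / s)) atTop (𝓝 1) := by
  have h := (continuous_exp.tendsto 0).comp (tendsto_const_nhds.div_atTop tendsto_id (a := -a))
  rwa [exp_zero] at h

lemma integrableOn_Ioi_exp_neg_div_div_sq {a T : ℝ} (ha : 0 < a) (hT : 0 < T) :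
    IntegrableOn (fun t => exp (-a / t) / t ^ 2) (Ioi T) :=
  integrableOn_Ioi_deriv_of_nonneg'
    (fun t ht => hasDerivAt_exp_neg_div_div ha.ne' (hT.trans_le ht).ne')
    (fun t _ => by positivity) ((tendsto_exp_neg_div_atTop a).div_const a)

lemma integral_Ioi_exp_neg_div_div_sq_le {a T : ℝ} (ha : 0 < a) (hT : 0 < T) :
    ∫ t in Ioi T, exp (-a / t) / t ^ 2 ≤ 1 / a := by
  rw [integral_Ioi_of_hasDerivAt_of_nonneg'
    (fun t ht => hasDerivAt_exp_neg_div_div ha.ne' (hT.trans_le ht).ne')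
    (fun t _ => by positivity) ((tendsto_exp_neg_div_atTop a).div_const a)]
  have : 0 ≤ exp (-a / T) / a := by positivity
  linarith

lemma setIntegral_Ioi_zero_le_of_le_of_le_div_sq {F : ℝ → ℝ} {M A B : ℝ} (hM : 0 < M)
    (hF : ∀ x ∈ Ioi 0, 0 ≤ F x) (hnear : ∀ x ∈ Ioc 0 M, F x ≤ A)
    (hfar : ∀ x ∈ Ioi M, F x ≤ B / x ^ 2) :
    ∫ x in Ioi 0, F x ≤ A * M + B / M := by
  set g : ℝ → ℝ := fun x => if x ≤ M then A else B / x ^ 2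
  have hg_near : EqOn g (fun _ => A) (Ioc 0 M) := fun x hx => if_pos hx.2
  have hg_far : EqOn g (fun x => B * (x ^ 2)⁻¹) (Ioi M) := fun x hx =>
    (if_neg (not_le.2 hx)).trans (div_eq_mul_inv _ _)
  have hint_near : IntegrableOn g (Ioc 0 M) :=
    (integrableOn_const measure_Ioc_lt_top.ne).congr_fun hg_near.symm measurableSet_Ioc
  have hint_far : IntegrableOn g (Ioi M) :=
    IntegrableOn.congr_fun ((integrableOn_Ioi_inv_sq hM).const_mul B) hg_far.symm
      measurableSet_Ioi
  have hsplit : Ioi (0:ℝ) = Ioc 0 M ∪ Ioi M := (Ioc_union_Ioi_eq_Ioi hM.le).symm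
  calc ∫ x in Ioi 0, F x ≤ ∫ x in Ioi 0, g x := by
        refine setIntegral_mono_of_nonneg hF (fun x hx => ?_) (hsplit ▸ hint_near.union hint_far)
        by_cases hxM : x ≤ M
        · exact (hnear x ⟨hx, hxM⟩).trans_eq (hg_near ⟨hx, hxM⟩).symm
        · exact (hfar x (not_le.1 hxM)).trans_eq (if_neg hxM).symm
    _ = (∫ x in Ioc 0 M, g x) + ∫ x in Ioi M, g x := by
        rw [hsplit, setIntegral_union (Ioc_disjoint_Ioi le_rfl) measurableSet_Ioi hint_near
          hint_far]
    _ = A * M + B / M := by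
        rw [setIntegral_congr_fun measurableSet_Ioc hg_near,
          setIntegral_congr_fun measurableSet_Ioi hg_far, setIntegral_const, integral_const_mul,
          integral_Ioi_inv_sq hM, Real.volume_real_Ioc_of_le hM.le]
        simp only [sub_zero, smul_eq_mul, div_eq_mul_inv]
        ring

lemma integral_Ioi_abs_deriv_Tdir_le {T y : ℝ} (hT : 0 < T) (hy : 0 ≤ y) (x : ℝ) :
    ∫ t in Ioi T, |deriv (fun x' => Tdir t x' y) x| * t ^ (-(1:ℝ)/2) ≤ 8 * y / T := by
  calc ∫ t in Ioi T, |deriv (fun x' => Tdir t x' y) x| * t ^ (-(1:ℝ)/2)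
      ≤ ∫ t in Ioi T, 8 * y * (t ^ 2)⁻¹ := by
        refine setIntegral_mono_of_nonneg (fun t ht => ?_) (fun t ht => ?_)
          ((integrableOn_Ioi_inv_sq hT).const_mul _)
        · have := hT.trans ht; positivity
        · rw [← div_eq_mul_inv]
          refine abs_deriv_Tdir_mul_rpow_le_of_le (hT.trans ht) hy fun u _ => ?_
          have : exp (-u ^ 2 / (8 * t)) ≤ 1 := exp_le_one_iff.2 <| by
            have := hT.trans ht; rw [neg_div]; exact neg_nonpos.2 (by positivity)
          linarith
    _ = 8 * y / T := by rw [integral_const_mul, integral_Ioi_inv_sq hT, div_eq_mul_inv]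

lemma integral_Ioi_abs_deriv_Tdir_le_of_two_mul_le {T x y : ℝ} (hT : 0 < T) (hy : 0 ≤ y)
    (hx : 0 < x) (hxy : 2 * y ≤ x) :
    ∫ t in Ioi T, |deriv (fun x' => Tdir t x' y) x| * t ^ (-(1:ℝ)/2) ≤ 256 * y / x ^ 2 := by
  have ha : 0 < x ^ 2 / 32 := by positivity
  calc ∫ t in Ioi T, |deriv (fun x' => Tdir t x' y) x| * t ^ (-(1:ℝ)/2)
      ≤ ∫ t in Ioi T, 8 * y * (exp (-(x ^ 2 / 32) / t) / t ^ 2) := by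
        refine setIntegral_mono_of_nonneg (fun t ht => ?_) (fun t ht => ?_)
          ((integrableOn_Ioi_exp_neg_div_div_sq ha hT).const_mul _)
        · have := hT.trans ht; positivity
        · have ht0 := hT.trans ht
          calc _ ≤ 8 * exp (-(x ^ 2 / 32) / t) * y / t ^ 2 :=
                abs_deriv_Tdir_mul_rpow_le_of_le ht0 hy fun u hu => ?_
            _ = 8 * y * (exp (-(x ^ 2 / 32) / t) / t ^ 2) := by ring
          -- `u ≥ x - y ≥ x / 2`
          have hu2 : x ^ 2 / 4 ≤ u ^ 2 := by nlinarith [hu.1]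
          gcongr 8 * exp ?_
          rw [div_le_div_iff₀ (by positivity) ht0]
          nlinarith
    _ ≤ 8 * y * (1 / (x ^ 2 / 32)) := by
        rw [integral_const_mul]; gcongr; exact integral_Ioi_exp_neg_div_div_sq_le ha hT
    _ = 256 * y / x ^ 2 := by field_simp; ring

theorem dirichlet_A4 :
    ∃ C : ℝ, 0 < C ∧ ∀ n : ℤ, ∀ y : ℝ, y ∈ Icc ((2:ℝ)^(n-1)) ((2:ℝ)^(n+2)) →
      ∫ x in Ioi (0:ℝ), ∫ t in Ioi ((4:ℝ)^n),
        |deriv (fun x' => Tdir t x' y) x| * t ^ (-(1:ℝ)/2) ≤ C := by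
  refine ⟨384, by norm_num, fun n y hy => ?_⟩
  set p : ℝ := 2 ^ n
  have hp : 0 < p := by positivity
  have hT : (4:ℝ) ^ n = p ^ 2 := by
    rw [← zpow_natCast, ← zpow_mul, mul_comm, zpow_mul]; norm_num
  have hT0 : 0 < (4:ℝ) ^ n := by positivity
  have hy0 : 0 < y := (zpow_pos two_pos _).trans_le hy.1
  have hy4 : y ≤ 4 * p := hy.2.trans_eq (by rw [zpow_add₀ two_ne_zero]; norm_num; ring)
  calc _ ≤ 8 * y / 4 ^ n * (8 * p) + 256 * y / (8 * p) :=
        setIntegral_Ioi_zero_le_of_le_of_le_div_sq (by positivity)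
          (fun x _ => setIntegral_nonneg measurableSet_Ioi fun t ht => by
            have := hT0.trans ht; positivity)
          (fun x _ => integral_Ioi_abs_deriv_Tdir_le hT0 hy0.le x)
          (fun x hx => integral_Ioi_abs_deriv_Tdir_le_of_two_mul_le hT0 hy0.le
            ((by positivity : (0:ℝ) < 8 * p).trans hx) (by linarith [hx.out]))
    _ = 96 * (y / p) := by rw [hT]; field_simp; ring
    _ ≤ 384 := by linarith [(div_le_iff₀ hp).2 hy4]
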